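/- arXiv:2109.01810 — 3 statements merged into one kernel-verified Lean document; each statement's English description precedes it below -/
import Mathlib

section
/- Let σ be any element of order 5 in A₅ and let H = ⟨σ⟩ be the cyclic subgroup it generates, so that the coset space A₅/H has 12 elements. Then every ℚ[A₅]-linear map from V_ℚ to the permutation module ℚ[A₅/H] (the ℚ-vector space of functions A₅/H → ℚ with A₅ acting by left translation of cosets) is zero; i.e. the reflection representation V does not occur in the 12-dimensional permutation representation of A₅ on A₅/H. -/
/-- The alternating group on the `5`-element set `Fin 5`. -/
abbrev A5 : Subgroup (Equiv.Perm (Fin 5)) := alternatingGroup (Fin 5)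

/-- The representation of `A₅` on `Fin 5 → R` by permutation of the coordinates. -/
def permRep (R : Type) [CommRing R] : Representation R A5 (Fin 5 → R) where
  toFun g := LinearMap.funLeft R R ⇑((g : Equiv.Perm (Fin 5))⁻¹)
  map_one' := by
    ext v i
    simp
  map_mul' g h := by
    ext v i
    simp [LinearMap.funLeft, Equiv.Perm.mul_apply]

/-- The subspace `V_ℚ` of `ℚ⁵` consisting of the vectors whose coordinates sum to zero
(the restriction to `A₅` of the reflection representation of `S₅`). -/
def Vq : Submodule ℚ (Fin 5 → ℚ) where
  carrier := {x | ∑ i, x i = 0}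
  add_mem' := by
    intro a b ha hb
    simp only [Set.mem_setOf_eq] at *
    simp [Finset.sum_add_distrib, ha, hb]
  zero_mem' := by simp
  smul_mem' := by
    intro c x hx
    simp only [Set.mem_setOf_eq] at *
    simp [← Finset.mul_sum, hx]

lemma permRep_mem_Vq (g : A5) {x : Fin 5 → ℚ} (hx : x ∈ Vq) : permRep ℚ g x ∈ Vq := by
  show ∑ i, x (((g : Equiv.Perm (Fin 5))⁻¹) i) = 0
  rw [Equiv.sum_comp ((g : Equiv.Perm (Fin 5))⁻¹) x]
  exact hx

/-- The representation of `A₅` on `V_ℚ` obtained by restricting the coordinate-permutation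
representation on `ℚ⁵`. -/
def VqRep : Representation ℚ A5 ↥Vq where
  toFun g := LinearMap.restrict (permRep ℚ g) (fun _ hx => permRep_mem_Vq g hx)
  map_one' := by
    refine LinearMap.ext fun x => Subtype.ext ?_
    show permRep ℚ 1 x.1 = x.1
    simp [map_one]
  map_mul' g h := by
    refine LinearMap.ext fun x => Subtype.ext ?_
    show permRep ℚ (g * h) x.1 = permRep ℚ g (permRep ℚ h x.1)
    rw [map_mul]
    rfl

lemma order5_ne_fixed (π : Equiv.Perm (Fin 5)) (h : orderOf π = 5) (i : Fin 5) : π i ≠ i := by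
  have hlcm : π.cycleType.lcm = 5 := by rw [Equiv.Perm.lcm_cycleType, h]
  have hall : ∀ n ∈ π.cycleType, n = 5 := by
    intro n hn
    have hd : n ∣ 5 := hlcm ▸ Multiset.dvd_lcm hn
    have h2 := Equiv.Perm.two_le_of_mem_cycleType hn
    have h5 : Nat.Prime 5 := by norm_num
    rcases h5.eq_one_or_self_of_dvd n hd with h1 | h1 <;> omega
  have hrep : π.cycleType = Multiset.replicate (Multiset.card π.cycleType) 5 :=
    Multiset.eq_replicate_card.2 hall
  have hsum : π.cycleType.sum = π.support.card := Equiv.Perm.sum_cycleType π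
  have hle : π.support.card ≤ 5 := by
    have := Finset.card_le_univ π.support
    simpa using this
  have hne : Multiset.card π.cycleType ≠ 0 := by
    intro h0
    rw [Multiset.card_eq_zero.mp h0] at hlcm
    simp at hlcm
  have hsum5 : π.cycleType.sum = Multiset.card π.cycleType * 5 := by
    conv_lhs => rw [hrep]
    simp [Multiset.sum_replicate, mul_comm]
  have hcard1 : π.support.card = 5 := by omega
  have huniv : π.support = Finset.univ := Finset.eq_univ_of_card _ (by simpa using hcard1)
  have : i ∈ π.support := huniv ▸ Finset.mem_univ i
  exact Equiv.Perm.mem_support.mp this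

lemma pow_apply_inj_aux (π : Equiv.Perm (Fin 5)) (h : orderOf π = 5) (i : Fin 5)
    {a b : ℕ} (hb : b < 5) (hab : a ≤ b) (he : (π ^ a) i = (π ^ b) i) : a = b := by
  have hd : (π ^ (b - a)) i = i := by
    apply (π ^ a).injective
    rw [← Equiv.Perm.mul_apply, ← pow_add, Nat.add_sub_cancel' hab]
    exact he.symm
  by_contra hne
  set d := b - a with hdd
  obtain ⟨hd1, hd4⟩ : 1 ≤ d ∧ d ≤ 4 := by omega
  have hex : ∃ e, d * e % 5 = 1 := by
    interval_cases d
    · exact ⟨1, rfl⟩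
    · exact ⟨3, rfl⟩
    · exact ⟨2, rfl⟩
    · exact ⟨4, rfl⟩
  obtain ⟨e, he5⟩ := hex
  have h1 : (π ^ (d * e)) i = i := by
    rw [pow_mul]
    exact Equiv.Perm.pow_apply_eq_self_of_apply_eq_self hd e
  have h2 : π ^ (d * e) = π := by
    rw [← pow_mod_orderOf, h, he5, pow_one]
  exact order5_ne_fixed π h i (h2 ▸ h1)

lemma pow_bij (π : Equiv.Perm (Fin 5)) (h : orderOf π = 5) (i : Fin 5) :
    Function.Bijective (fun k : Fin 5 => (π ^ (k : ℕ)) i) := by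
  apply Finite.injective_iff_bijective.mp
  intro a b hab
  rcases le_total (a : ℕ) (b : ℕ) with hle | hle
  · exact Fin.ext (pow_apply_inj_aux π h i b.isLt hle hab)
  · exact (Fin.ext (pow_apply_inj_aux π h i a.isLt hle hab.symm)).symm

lemma sum_orbit (π : Equiv.Perm (Fin 5)) (h : orderOf π = 5) (i : Fin 5) (v : Fin 5 → ℚ) :
    ∑ k : Fin 5, v ((π ^ (k : ℕ)) i) = ∑ j, v j :=
  Fintype.sum_bijective _ (pow_bij π h i) _ _ (fun _ => rfl)

/-- Let `σ` be any element of order `5` in `A₅` and `H = ⟨σ⟩` the cyclic subgroup it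
generates, so that the coset space `A₅/H` has `12` elements. Every `ℚ[A₅]`-linear map
from `V_ℚ` to the permutation module `ℚ[A₅/H]` (functions on `A₅/H`, with `A₅` acting by
left translation of cosets) is zero: the reflection representation `V` does not occur in
the `12`-dimensional permutation representation of `A₅` on `A₅/H`. -/
theorem Vq_hom_to_permutation_module_eq_zero (σ : A5) (hσ : orderOf σ = 5) :
    Nat.card (A5 ⧸ Subgroup.zpowers σ) = 12 ∧
    ∀ (φ : ↥Vq →ₗ[ℚ] ((A5 ⧸ Subgroup.zpowers σ) → ℚ)),
      (∀ (g : A5) (v : ↥Vq) (x : A5 ⧸ Subgroup.zpowers σ),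
        φ (VqRep g v) x = φ v (g⁻¹ • x)) →
      φ = 0 := by
  have hτ : orderOf ((σ : Equiv.Perm (Fin 5))) = 5 := by
    rw [Subgroup.orderOf_coe]; exact hσ
  have hcardA5 : Nat.card A5 = 60 := by
    have h2 := two_mul_card_alternatingGroup (α := Fin 5)
    rw [Fintype.card_perm, Fintype.card_fin, Fintype.card_eq_nat_card] at h2
    have h120 : Nat.factorial 5 = 120 := rfl
    rw [h120] at h2
    show Nat.card ↥(alternatingGroup (Fin 5)) = 60
    omega
  have hz : Nat.card (Subgroup.zpowers σ) = 5 := by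
    rw [Nat.card_zpowers]; exact hσ
  have hidx : (Subgroup.zpowers σ).index = 12 := by
    have hm := Subgroup.index_mul_card (Subgroup.zpowers σ)
    rw [hz, hcardA5] at hm
    omega
  refine ⟨by rw [← Subgroup.index_eq_card]; exact hidx, ?_⟩
  intro φ hequiv
  -- key: evaluation at the identity coset vanishes
  have key : ∀ v : Vq, φ v (QuotientGroup.mk (1 : A5)) = 0 := by
    intro v
    have hinv : ∀ w : Vq, φ (VqRep σ w) (QuotientGroup.mk (1 : A5)) =
        φ w (QuotientGroup.mk (1 : A5)) := by
      intro w
      rw [hequiv σ w (QuotientGroup.mk (1 : A5))]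
      have hx : σ⁻¹ • (QuotientGroup.mk (1 : A5) : A5 ⧸ Subgroup.zpowers σ) =
          QuotientGroup.mk (1 : A5) := by
        rw [MulAction.Quotient.smul_mk, smul_eq_mul, mul_one]
        exact QuotientGroup.eq.mpr (by simpa using Subgroup.mem_zpowers σ)
      rw [hx]
    have hpow : ∀ (k : ℕ) (w : Vq), φ (VqRep (σ ^ k) w) (QuotientGroup.mk (1 : A5)) =
        φ w (QuotientGroup.mk (1 : A5)) := by
      intro k
      induction k with
      | zero => intro w; rw [pow_zero, map_one]; rfl
      | succ n ih =>
        intro w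
        rw [pow_succ, map_mul]
        exact (ih (VqRep σ w)).trans (hinv w)
    have hsum : ∑ k ∈ Finset.range 5, (VqRep (σ ^ k) v) = 0 := by
      apply Subtype.ext
      have hco : ((∑ k ∈ Finset.range 5, (VqRep (σ ^ k) v) : Vq) : Fin 5 → ℚ) =
          ∑ k ∈ Finset.range 5, ((VqRep (σ ^ k) v : Vq) : Fin 5 → ℚ) := by
        exact AddSubmonoidClass.coe_finset_sum _ _
      rw [hco]
      funext i
      rw [Finset.sum_apply]
      have hval : ∀ k : ℕ, ((VqRep (σ ^ k) v : Vq) : Fin 5 → ℚ) i =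
          (v : Fin 5 → ℚ) ((((σ : Equiv.Perm (Fin 5))⁻¹) ^ k) i) := by
        intro k
        show (v : Fin 5 → ℚ) (((σ ^ k : A5) : Equiv.Perm (Fin 5))⁻¹ i) = _
        congr 2
      simp only [hval]
      have hτ' : orderOf ((σ : Equiv.Perm (Fin 5))⁻¹) = 5 := by
        rw [orderOf_inv]; exact hτ
      have := sum_orbit ((σ : Equiv.Perm (Fin 5))⁻¹) hτ' i (v : Fin 5 → ℚ)
      rw [← Fin.sum_univ_eq_sum_range, this]
      exact v.2
    have h5 : (5 : ℚ) * φ v (QuotientGroup.mk (1 : A5)) = 0 := by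
      calc (5 : ℚ) * φ v (QuotientGroup.mk (1 : A5))
          = ∑ k ∈ Finset.range 5, φ (VqRep (σ ^ k) v) (QuotientGroup.mk (1 : A5)) := by
            have hc : ∑ k ∈ Finset.range 5, φ (VqRep (σ ^ k) v) (QuotientGroup.mk (1 : A5)) =
                ∑ _k ∈ Finset.range 5, φ v (QuotientGroup.mk (1 : A5)) :=
              Finset.sum_congr rfl (fun k _ => hpow k v)
            rw [hc, Finset.sum_const, Finset.card_range, nsmul_eq_mul]
            norm_num
        _ = φ (∑ k ∈ Finset.range 5, VqRep (σ ^ k) v) (QuotientGroup.mk (1 : A5)) := by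
            rw [map_sum, Finset.sum_apply]
        _ = 0 := by rw [hsum, map_zero]; rfl
    have : φ v (QuotientGroup.mk (1 : A5)) = 0 := by linarith
    exact this
  refine LinearMap.ext fun v => funext fun x => ?_
  induction x using QuotientGroup.induction_on with
  | H g =>
    have h1 := hequiv g⁻¹ v (QuotientGroup.mk (1 : A5))
    rw [inv_inv] at h1
    have hg : g • (QuotientGroup.mk (1 : A5) : A5 ⧸ Subgroup.zpowers σ) =
        QuotientGroup.mk g := by
      rw [MulAction.Quotient.smul_mk, smul_eq_mul, mul_one]
    rw [hg] at h1
    show φ v (QuotientGroup.mk g) = 0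
    rw [← h1, key]
end

section
/- Let Γ be the subgroup of SL(2,ℤ) generated by the two matrices T³ = [[1,3],[0,1]] and T' = [[1,0],[-1,1]]. Then Γ has index exactly 8 in SL(2,ℤ). -/
open Matrix

/-- The matrix `T³ = [[1,3],[0,1]]` in `SL(2,ℤ)`. -/
def Tcubed : SpecialLinearGroup (Fin 2) ℤ :=
  ⟨!![1, 3; 0, 1], by norm_num [Matrix.det_fin_two_of]⟩

/-- The matrix `T' = S T S⁻¹ = [[1,0],[-1,1]]` in `SL(2,ℤ)`. -/
def Tprime : SpecialLinearGroup (Fin 2) ℤ :=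
  ⟨!![1, 0; -1, 1], by norm_num [Matrix.det_fin_two_of]⟩

/-!
Reduction mod 3 makes `SL(2,ℤ)` act on `(ℤ/3)²`, and both generators fix `e₂ = (0,1)`.
Conversely every matrix fixing `e₂` mod 3 lies in `Γ`: right multiplication by `T'ᵏ` and
`T³ᵐ` acts on the bottom row `(c, d)` by `c ↦ c - k d` and `d ↦ d + 3 m c`, so a Euclidean
algorithm reaches `c = 0` or `d = 0`; as `d ≡ 1 mod 3` it is `c = 0`, and then the matrix is
a power of `T³`. Hence `Γ` is the stabiliser of `e₂`, and its index is the size of the orbit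
of `e₂`: the 8 nonzero vectors of `(ℤ/3)²`.
-/

open scoped MatrixGroups
open MulAction Subgroup

lemma Int.exists_two_mul_natAbs_sub_mul_le (a b : ℤ) (hb : b ≠ 0) :
    ∃ k : ℤ, 2 * (a - k * b).natAbs ≤ b.natAbs := by
  have hpos : 0 < b.natAbs := Int.natAbs_pos.mpr hb
  obtain ⟨k, hk⟩ := Int.natAbs_dvd.mp (Int.dvd_bmod_sub_self (x := a) (m := b.natAbs))
  have hlow := Int.le_bmod (x := a) hpos
  have hhigh := Int.bmod_lt (x := a) hpos
  have hbmod : a - -k * b = Int.bmod a b.natAbs := by linarith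
  exact ⟨-k, by omega⟩

instance (N : ℕ) : MulAction SL(2, ℤ) (Fin 2 → ZMod N) :=
  MulAction.compHom _ (SpecialLinearGroup.map (Int.castRingHom (ZMod N)))

lemma smul_vecCons_zero_one {N : ℕ} (g : SL(2, ℤ)) :
    g • (![0, 1] : Fin 2 → ZMod N) = ![(g 0 1 : ZMod N), g 1 1] := by
  ext i
  fin_cases i <;>
    simp [compHom_smul_def, Matrix.SpecialLinearGroup.smul_def, mulVec, dotProduct]

lemma mem_stabilizer_vecCons_zero_one_iff {N : ℕ} {g : SL(2, ℤ)} :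
    g ∈ stabilizer SL(2, ℤ) (![0, 1] : Fin 2 → ZMod N) ↔
      (g 0 1 : ZMod N) = 0 ∧ (g 1 1 : ZMod N) = 1 := by
  simp [mem_stabilizer_iff, smul_vecCons_zero_one]

lemma mem_orbit_vecCons_zero_one_iff {N : ℕ} {v : Fin 2 → ZMod N} :
    v ∈ orbit SL(2, ℤ) (![0, 1] : Fin 2 → ZMod N) ↔
      ∃ g : SL(2, ℤ), (g 0 1 : ZMod N) = v 0 ∧ (g 1 1 : ZMod N) = v 1 := by
  simp [mem_orbit_iff, smul_vecCons_zero_one, funext_iff, Fin.forall_fin_two]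

lemma coe_Tcubed_zpow (n : ℤ) :
    (Tcubed ^ n : SL(2, ℤ)) = (!![1, 3 * n; 0, 1] : Matrix (Fin 2) (Fin 2) ℤ) := by
  induction n with
  | zero => simp [one_fin_two]
  | succ n ih =>
    rw [_root_.zpow_add_one, Matrix.SpecialLinearGroup.coe_mul, ih]
    change !![1, 3 * (n : ℤ); 0, 1] * !![1, 3; 0, 1] = _
    rw [mul_fin_two]
    congrm !![?_, ?_; ?_, ?_] <;> ring
  | pred n ih =>
    rw [_root_.zpow_sub_one, Matrix.SpecialLinearGroup.coe_mul, ih,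
      Matrix.SpecialLinearGroup.coe_inv]
    change !![1, 3 * (-n : ℤ); 0, 1] * adjugate !![1, 3; 0, 1] = _
    rw [adjugate_fin_two_of, mul_fin_two]
    congrm !![?_, ?_; ?_, ?_] <;> ring

lemma coe_Tprime_zpow (n : ℤ) :
    (Tprime ^ n : SL(2, ℤ)) = (!![1, 0; -n, 1] : Matrix (Fin 2) (Fin 2) ℤ) := by
  induction n with
  | zero => simp [one_fin_two]
  | succ n ih =>
    rw [_root_.zpow_add_one, Matrix.SpecialLinearGroup.coe_mul, ih]
    change !![1, 0; -(n : ℤ), 1] * !![1, 0; -1, 1] = _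
    rw [mul_fin_two]
    congrm !![?_, ?_; ?_, ?_] <;> ring
  | pred n ih =>
    rw [_root_.zpow_sub_one, Matrix.SpecialLinearGroup.coe_mul, ih,
      Matrix.SpecialLinearGroup.coe_inv]
    change !![1, 0; -(-n : ℤ), 1] * adjugate !![1, 0; -1, 1] = _
    rw [adjugate_fin_two_of, mul_fin_two]
    congrm !![?_, ?_; ?_, ?_] <;> ring

lemma coe_mul_Tcubed_zpow (g : SL(2, ℤ)) (n : ℤ) :
    (g * Tcubed ^ n : SL(2, ℤ)) = (!![g 0 0, g 0 1 + 3 * n * g 0 0;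
      g 1 0, g 1 1 + 3 * n * g 1 0] : Matrix (Fin 2) (Fin 2) ℤ) := by
  rw [Matrix.SpecialLinearGroup.coe_mul, coe_Tcubed_zpow]
  conv_lhs => rw [eta_fin_two g.1, mul_fin_two]
  congrm !![?_, ?_; ?_, ?_] <;> ring

lemma coe_mul_Tprime_zpow (g : SL(2, ℤ)) (n : ℤ) :
    (g * Tprime ^ n : SL(2, ℤ)) = (!![g 0 0 - n * g 0 1, g 0 1;
      g 1 0 - n * g 1 1, g 1 1] : Matrix (Fin 2) (Fin 2) ℤ) := by
  rw [Matrix.SpecialLinearGroup.coe_mul, coe_Tprime_zpow]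
  conv_lhs => rw [eta_fin_two g.1, mul_fin_two]
  congrm !![?_, ?_; ?_, ?_] <;> ring

def wingerMonodromyGroup : Subgroup SL(2, ℤ) := closure {Tcubed, Tprime}

lemma Tcubed_zpow_mem (n : ℤ) : Tcubed ^ n ∈ wingerMonodromyGroup :=
  zpow_mem (subset_closure (by simp)) n

lemma Tprime_zpow_mem (n : ℤ) : Tprime ^ n ∈ wingerMonodromyGroup :=
  zpow_mem (subset_closure (by simp)) n

theorem exists_mem_wingerMonodromyGroup_bottom_row_mul_eq_zero (g : SL(2, ℤ)) :
    ∃ γ ∈ wingerMonodromyGroup, (g * γ) 1 0 = 0 ∨ (g * γ) 1 1 = 0 := by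
  induction hn : (g 1 1).natAbs using Nat.strong_induction_on generalizing g with
  | _ n ih =>
  by_cases hd : g 1 1 = 0
  · exact ⟨1, one_mem _, by simp [hd]⟩
  obtain ⟨k, hk⟩ := Int.exists_two_mul_natAbs_sub_mul_le (g 1 0) (g 1 1) hd
  set g' := g * Tprime ^ k with hg'
  have hc' : g' 1 0 = g 1 0 - k * g 1 1 := by rw [hg', coe_mul_Tprime_zpow]; rfl
  have hd' : g' 1 1 = g 1 1 := by rw [hg', coe_mul_Tprime_zpow]; rfl
  by_cases hc : g' 1 0 = 0
  · exact ⟨Tprime ^ k, Tprime_zpow_mem k, Or.inl hc⟩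
  obtain ⟨m, hm⟩ := Int.exists_two_mul_natAbs_sub_mul_le (g' 1 1) (3 * g' 1 0) (by simpa)
  set g'' := g' * Tcubed ^ (-m) with hg''
  have hd'' : g'' 1 1 = g' 1 1 - m * (3 * g' 1 0) :=
    calc g'' 1 1 = g' 1 1 + 3 * -m * g' 1 0 := by rw [hg'', coe_mul_Tcubed_zpow]; rfl
      _ = g' 1 1 - m * (3 * g' 1 0) := by ring
  -- `|d''| ≤ 3|c'|/2 ≤ 3|d|/4`
  have hlt : (g'' 1 1).natAbs < n := by
    rw [hd', hc'] at hm
    rw [hd'', hd', hc']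
    omega
  obtain ⟨γ, hγ, hbot⟩ := ih _ hlt g'' rfl
  refine ⟨Tprime ^ k * (Tcubed ^ (-m) * γ),
    mul_mem (Tprime_zpow_mem k) (mul_mem (Tcubed_zpow_mem (-m)) hγ), ?_⟩
  simpa only [hg'', hg', mul_assoc] using hbot

local notation "e₂" => (![0, 1] : Fin 2 → ZMod 3)

lemma wingerMonodromyGroup_le_stabilizer : wingerMonodromyGroup ≤ stabilizer SL(2, ℤ) e₂ := by
  rw [wingerMonodromyGroup, closure_le]
  rintro g (rfl | rfl) <;> rw [SetLike.mem_coe, mem_stabilizer_vecCons_zero_one_iff] <;> decide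

lemma eq_Tcubed_zpow_of_mem_stabilizer {g : SL(2, ℤ)} (hg : g ∈ stabilizer SL(2, ℤ) e₂)
    (hc : g 1 0 = 0) : g = Tcubed ^ (g 0 1 / 3) := by
  obtain ⟨hb, hd⟩ := mem_stabilizer_vecCons_zero_one_iff.mp hg
  have hdet : g 0 0 * g 1 1 = 1 := by
    have h := g.det_coe
    rwa [det_fin_two, hc, mul_zero, sub_zero] at h
  have hd1 : g 1 1 = 1 := by
    rcases Int.eq_one_or_neg_one_of_mul_eq_one' hdet with ⟨-, h⟩ | ⟨-, h⟩
    · exact h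
    · rw [h] at hd; exact absurd hd (by decide)
  have ha1 : g 0 0 = 1 := by simpa [hd1] using hdet
  have h3 : (3 : ℤ) ∣ g 0 1 := (ZMod.intCast_zmod_eq_zero_iff_dvd _ 3).mp hb
  ext i j
  fin_cases i <;> fin_cases j <;> simp [coe_Tcubed_zpow, ha1, hc, hd1, Int.mul_ediv_cancel' h3]

theorem stabilizer_eq_wingerMonodromyGroup : stabilizer SL(2, ℤ) e₂ = wingerMonodromyGroup := by
  refine le_antisymm (fun g hg => ?_) wingerMonodromyGroup_le_stabilizer
  obtain ⟨γ, hγ, hbot⟩ := exists_mem_wingerMonodromyGroup_bottom_row_mul_eq_zero g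
  have hgγ : g * γ ∈ stabilizer SL(2, ℤ) e₂ := mul_mem hg (wingerMonodromyGroup_le_stabilizer hγ)
  have hd : (g * γ) 1 1 ≠ 0 := fun h => by
    have h1 := (mem_stabilizer_vecCons_zero_one_iff.mp hgγ).2
    rw [h] at h1; exact absurd h1 (by decide)
  have hmem : g * γ ∈ wingerMonodromyGroup := by
    rw [eq_Tcubed_zpow_of_mem_stabilizer hgγ (hbot.resolve_right hd)]
    exact Tcubed_zpow_mem _
  simpa using mul_mem hmem (inv_mem hγ)

theorem orbit_vecCons_zero_one : orbit SL(2, ℤ) e₂ = {0}ᶜ := by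
  ext v
  rw [mem_orbit_vecCons_zero_one_iff, Set.mem_compl_singleton_iff]
  constructor
  · rintro ⟨g, hb, hd⟩ rfl
    have hdet := congrArg (Int.cast : ℤ → ZMod 3) g.det_coe
    rw [det_fin_two] at hdet
    push_cast at hdet
    rw [hb, hd] at hdet
    simp at hdet
  · intro hv
    have key : ∀ w : Fin 2 → ZMod 3, w ≠ 0 →
        w 1 = 1 ∨ w 1 = -1 ∨ w 1 = 0 ∧ (w 0 = 1 ∨ w 0 = -1) := by
      decide
    rcases key v hv with hv1 | hv1 | ⟨hv1, hv0 | hv0⟩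
    · exact ⟨ModularGroup.T ^ ((v 0).val : ℤ), by simp [ModularGroup.coe_T_zpow, hv1]⟩
    · exact ⟨-ModularGroup.T ^ (-((v 0).val : ℤ)), by simp [ModularGroup.coe_T_zpow, hv1]⟩
    · exact ⟨-ModularGroup.S, by simp [ModularGroup.coe_S, hv1, hv0]⟩
    · exact ⟨ModularGroup.S, by simp [ModularGroup.coe_S, hv1, hv0]⟩

/-- The subgroup `Γ` of `SL(2,ℤ)` generated by `T³ = [[1,3],[0,1]]` and
`T' = [[1,0],[-1,1]]` (the monodromy group of the `V₀`-part of the Winger pencil)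
has index exactly `8` in `SL(2,ℤ)`. -/
theorem winger_monodromy_index_eq_eight :
    (Subgroup.closure {Tcubed, Tprime} : Subgroup (SpecialLinearGroup (Fin 2) ℤ)).index = 8 := by
  change wingerMonodromyGroup.index = 8
  rw [← stabilizer_eq_wingerMonodromyGroup, index_stabilizer, orbit_vecCons_zero_one,
    Set.ncard_compl]
  simp
end

section
/- The subgroup of SL(2,ℤ) generated by the two matrices [[1,1],[0,1]] and [[1,0],[3,1]] is equal to the congruence subgroup Γ₁(3) = { [[a,b],[c,d]] ∈ SL(2,ℤ) : c ≡ 0 (mod 3), a ≡ 1 (mod 3), d ≡ 1 (mod 3) }. -/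
/-!
Both generators lie in `Γ₁(3)`. Conversely, reduce `A = [[a,b],[c,d]] ∈ Γ₁(3)` by a Euclidean
descent on `|c|`: left multiplication by `Umat ^ n` replaces `a` by `a + n c`, which can be made
at most `|c| / 2` in absolute value, and then `Lmat ^ m` replaces `c` by `c + 3 m a`, which can be
made at most `3 |a| / 2 ≤ 3 |c| / 4`. The congruence `a ≡ 1 (mod 3)` keeps `a ≠ 0` along the
way, so the descent ends at `c = 0`, where the same congruence forces `A = Umat ^ b`.
-/

open Matrix

/-- The congruence subgroup `Γ₁(3)` of `SL(2,ℤ)`, consisting of the matrices `[[a,b],[c,d]]`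
with `c ≡ 0 (mod 3)` and `a ≡ d ≡ 1 (mod 3)`. -/
def Gamma1 : Subgroup (SpecialLinearGroup (Fin 2) ℤ) where
  carrier := {A | A.1 1 0 ≡ 0 [ZMOD 3] ∧ A.1 0 0 ≡ 1 [ZMOD 3] ∧ A.1 1 1 ≡ 1 [ZMOD 3]}
  one_mem' := by
    refine ⟨?_, ?_, ?_⟩ <;> simp [SpecialLinearGroup.coe_one, Matrix.one_apply]
  mul_mem' := by
    rintro A B ⟨hc, ha, hd⟩ ⟨hc', ha', hd'⟩
    have e : ∀ i j : Fin 2, ((A * B).1) i j = A.1 i 0 * B.1 0 j + A.1 i 1 * B.1 1 j := by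
      intro i j
      change ((A : Matrix (Fin 2) (Fin 2) ℤ) * (B : Matrix (Fin 2) (Fin 2) ℤ)) i j = _
      rw [Matrix.mul_apply, Fin.sum_univ_two]
    refine ⟨?_, ?_, ?_⟩
    · show ((A * B).1) 1 0 ≡ 0 [ZMOD 3]
      rw [e]
      simpa using (hc.mul ha').add (hd.mul hc')
    · show ((A * B).1) 0 0 ≡ 1 [ZMOD 3]
      rw [e]
      simpa using (ha.mul ha').add ((Int.ModEq.refl (A.1 0 1)).mul hc')
    · show ((A * B).1) 1 1 ≡ 1 [ZMOD 3]
      rw [e]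
      simpa using (hc.mul (Int.ModEq.refl (B.1 0 1))).add (hd.mul hd')
  inv_mem' := by
    rintro A ⟨hc, ha, hd⟩
    show _ ∧ _ ∧ _
    rw [SpecialLinearGroup.SL2_inv_expl]
    refine ⟨?_, ?_, ?_⟩
    · simpa using hc.neg
    · exact hd
    · exact ha

/-- The matrix `[[1,1],[0,1]]` in `SL(2,ℤ)`. -/
def Umat : SpecialLinearGroup (Fin 2) ℤ :=
  ⟨!![1, 1; 0, 1], by norm_num [Matrix.det_fin_two_of]⟩

/-- The matrix `[[1,0],[3,1]]` in `SL(2,ℤ)`. -/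
def Lmat : SpecialLinearGroup (Fin 2) ℤ :=
  ⟨!![1, 0; 3, 1], by norm_num [Matrix.det_fin_two_of]⟩

open Matrix.SpecialLinearGroup
open scoped MatrixGroups

theorem Int.exists_two_mul_natAbs_add_mul_le (a : ℤ) {c : ℤ} (hc : c ≠ 0) :
    ∃ n : ℤ, 2 * (a + n * c).natAbs ≤ c.natAbs := by
  have hpos : 0 < c.natAbs := Int.natAbs_pos.mpr hc
  obtain ⟨k, hk⟩ := Int.dvd_bmod_sub_self (x := a) (m := c.natAbs)
  refine ⟨k * c.sign, ?_⟩
  have hr : a + k * c.sign * c = a.bmod c.natAbs := by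
    rw [mul_assoc, Int.sign_mul_self_eq_natAbs]; linarith
  have := Int.le_bmod (x := a) hpos
  have := Int.bmod_le (x := a) hpos
  omega

-- `Umat` is definitionally `ModularGroup.T`.
theorem coe_Umat_zpow (n : ℤ) : (Umat ^ n).1 = !![1, n; 0, 1] :=
  ModularGroup.coe_T_zpow n

theorem coe_Lmat_inv : (Lmat⁻¹).1 = !![1, 0; -3, 1] := by
  rw [SL2_inv_expl]; rfl

theorem coe_Lmat_zpow (m : ℤ) : (Lmat ^ m).1 = !![1, 0; 3 * m, 1] := by
  induction m with
  | zero => simp [Matrix.one_fin_two]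
  | succ m h =>
    simp_rw [_root_.zpow_add, zpow_one, coe_mul, h, Lmat, Matrix.mul_fin_two]
    congrm !![?_, ?_; ?_, ?_] <;> ring
  | pred m h =>
    simp_rw [_root_.zpow_sub, zpow_one, coe_mul, h, coe_Lmat_inv, Matrix.mul_fin_two]
    congrm !![?_, ?_; ?_, ?_] <;> ring

theorem Umat_mem_Gamma1 : Umat ∈ Gamma1 := by
  refine ⟨?_, ?_, ?_⟩ <;> decide

theorem Lmat_mem_Gamma1 : Lmat ∈ Gamma1 := by
  refine ⟨?_, ?_, ?_⟩ <;> decide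

theorem closure_Umat_Lmat_le_Gamma1 : Subgroup.closure {Umat, Lmat} ≤ Gamma1 := by
  rw [Subgroup.closure_le]
  rintro _ (rfl | rfl)
  exacts [Umat_mem_Gamma1, Lmat_mem_Gamma1]

theorem eq_Umat_zpow_of_mem_Gamma1 {A : SL(2, ℤ)} (hA : A ∈ Gamma1) (hc : A 1 0 = 0) :
    A = Umat ^ A 0 1 := by
  obtain ⟨-, ha, -⟩ := hA
  have had : A 0 0 * A 1 1 = 1 := by
    have := A.det_coe
    rw [det_fin_two, hc] at this
    linarith
  rcases Int.eq_one_or_neg_one_of_mul_eq_one' had with ⟨ha1, hd1⟩ | ⟨ha1, -⟩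
  · ext i j
    fin_cases i <;> fin_cases j <;> simp [coe_Umat_zpow, ha1, hd1, hc]
  · rw [ha1] at ha
    exact absurd ha (by decide)

theorem Lmat_zpow_mul_Umat_zpow_mul_apply_one_zero (m n : ℤ) (A : SL(2, ℤ)) :
    (Lmat ^ m * Umat ^ n * A) 1 0 = A 1 0 + m * (3 * (A 0 0 + n * A 1 0)) := by
  simp only [coe_mul, coe_Lmat_zpow, coe_Umat_zpow, mul_apply, Fin.sum_univ_two, Fin.isValue,
    of_apply, cons_val', cons_val_zero, cons_val_fin_one, cons_val_one, mul_one, mul_zero, add_zero]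
  ring

theorem exists_natAbs_apply_one_zero_lt_of_mem_Gamma1 {A : SL(2, ℤ)} (hA : A ∈ Gamma1)
    (hc : A 1 0 ≠ 0) : ∃ m n : ℤ, ((Lmat ^ m * Umat ^ n * A) 1 0).natAbs < (A 1 0).natAbs := by
  obtain ⟨h3c, ha, -⟩ := hA
  obtain ⟨n, hn⟩ := Int.exists_two_mul_natAbs_add_mul_le (A 0 0) hc
  have ha' : A 0 0 + n * A 1 0 ≡ 1 [ZMOD 3] := by simpa using ha.add (h3c.mul_left n)
  have ha'0 : A 0 0 + n * A 1 0 ≠ 0 := fun h0 ↦ absurd (h0 ▸ ha') (by decide)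
  obtain ⟨m, hm⟩ := Int.exists_two_mul_natAbs_add_mul_le (A 1 0) (mul_ne_zero three_ne_zero ha'0)
  refine ⟨m, n, ?_⟩
  rw [Lmat_zpow_mul_Umat_zpow_mul_apply_one_zero]
  rw [Int.natAbs_mul, show (3 : ℤ).natAbs = 3 from rfl] at hm
  have := Int.natAbs_pos.mpr hc
  omega

theorem mem_closure_Umat_Lmat_of_mem_Gamma1 {A : SL(2, ℤ)} (hA : A ∈ Gamma1) :
    A ∈ Subgroup.closure {Umat, Lmat} := by
  have hU : Umat ∈ Subgroup.closure {Umat, Lmat} := Subgroup.subset_closure (by simp)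
  have hL : Lmat ∈ Subgroup.closure {Umat, Lmat} := Subgroup.subset_closure (by simp)
  by_cases hc : A 1 0 = 0
  · rw [eq_Umat_zpow_of_mem_Gamma1 hA hc]
    exact zpow_mem hU _
  · obtain ⟨m, n, hlt⟩ := exists_natAbs_apply_one_zero_lt_of_mem_Gamma1 hA hc
    have hg : Lmat ^ m * Umat ^ n ∈ Subgroup.closure {Umat, Lmat} :=
      mul_mem (zpow_mem hL m) (zpow_mem hU n)
    have hB : Lmat ^ m * Umat ^ n * A ∈ Subgroup.closure {Umat, Lmat} :=
      mem_closure_Umat_Lmat_of_mem_Gamma1 (mul_mem (closure_Umat_Lmat_le_Gamma1 hg) hA)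
    exact (Subgroup.mul_mem_cancel_left _ hg).mp hB
termination_by (A 1 0).natAbs

/-- The subgroup of `SL(2,ℤ)` generated by `[[1,1],[0,1]]` and `[[1,0],[3,1]]` is equal to
the congruence subgroup `Γ₁(3) = { [[a,b],[c,d]] ∈ SL(2,ℤ) : c ≡ 0, a ≡ d ≡ 1 (mod 3) }`. -/
theorem winger_generators_of_Gamma1 :
    Subgroup.closure {Umat, Lmat} = Gamma1 :=
  le_antisymm closure_Umat_Lmat_le_Gamma1 fun _ ↦ mem_closure_Umat_Lmat_of_mem_Gamma1
end
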